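/- arXiv:0912.1999 — 4 statements merged into one kernel-verified Lean document; each statement's English description precedes it below -/
import Mathlib

section
/- Let μ be a positive integer and a, b nonnegative integers with a ≥ μb. Among all sequences of a votes for A and b votes for B, the probability that a_r ≥ μ·b_r for all r equals (a - μb + 1)/(a + 1). -/
/-!
Let `N(n, a)` count the sequences of `n` votes with `a` votes for A whose every nonempty prefix
satisfies `μ · b_r ≤ a_r`. Splitting off the last vote gives Pascal's rule
`N(n + 1, a) = N(n, a) + N(n, a - 1)` whenever the full sequence itself satisfies the condition,
i.e. `μ (n + 1 - a) ≤ a`, and `N(n + 1, a) = 0` otherwise. The expression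
`C(n, a) - μ C(n, a + 1)` obeys the same Pascal rule and vanishes on the boundary
`μ (n - a) = a + 1`, so by induction it equals `N(n, a)` whenever `μ (n - a) ≤ a + 1`.
For `μ = 0` the condition is vacuous, which counts all sequences as `C(n, a)`; finally
`C(a + b, a + 1) (a + 1) = C(a + b, a) b` turns the quotient into `(a - μ b + 1) / (a + 1)`.
-/

/-- Number of A-votes (true) among the first `r` positions. -/
def countA (n : ℕ) (v : Fin n → Bool) (r : ℕ) : ℕ :=
  (Finset.univ.filter (fun i : Fin n => i.val < r ∧ v i = true)).card

/-- Number of B-votes (false) among the first `r` positions. -/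
def countB (n : ℕ) (v : Fin n → Bool) (r : ℕ) : ℕ :=
  (Finset.univ.filter (fun i : Fin n => i.val < r ∧ v i = false)).card

open Finset

section Counts

variable {n : ℕ}

theorem countA_snoc (u : Fin n → Bool) (x : Bool) (r : ℕ) :
    countA (n + 1) (Fin.snoc u x) r = countA n u r + if n < r ∧ x = true then 1 else 0 := by
  rw [countA, countA, card_filter, card_filter, Fin.sum_univ_castSucc]
  simp [Fin.snoc_castSucc, Fin.snoc_last]

theorem countB_snoc (u : Fin n → Bool) (x : Bool) (r : ℕ) :
    countB (n + 1) (Fin.snoc u x) r = countB n u r + if n < r ∧ x = false then 1 else 0 := by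
  rw [countB, countB, card_filter, card_filter, Fin.sum_univ_castSucc]
  simp [Fin.snoc_castSucc, Fin.snoc_last]

theorem countA_of_le (v : Fin n → Bool) {r : ℕ} (h : n ≤ r) :
    countA n v r = countA n v n := by
  unfold countA
  congr 1
  ext i
  simp only [mem_filter, mem_univ, true_and, Fin.is_lt, and_iff_right_iff_imp]
  exact fun _ => i.is_lt.trans_le h

theorem countA_snoc_self (u : Fin n → Bool) (x : Bool) :
    countA (n + 1) (Fin.snoc u x) (n + 1) = countA n u n + x.toNat := by
  rw [countA_snoc, countA_of_le u n.le_succ]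
  cases x <;> simp

theorem countA_add_countB_self (v : Fin n → Bool) : countA n v n + countB n v n = n := by
  simp only [countA, countB, Fin.is_lt, true_and, Bool.eq_false_iff, ne_eq]
  rw [card_filter_add_card_filter_not, card_univ, Fintype.card_fin]

end Counts

theorem Nat.choose_eq_mul_choose_succ {μ n a : ℕ} (h : μ * (n - a) = a + 1) :
    n.choose a = μ * n.choose (a + 1) := by
  apply Nat.eq_of_mul_eq_mul_right a.succ_pos
  calc n.choose a * (a + 1) = n.choose a * (n - a) * μ := by rw [← h]; ring
    _ = μ * n.choose (a + 1) * (a + 1) := by rw [← Nat.choose_succ_right_eq]; ring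

def IsBallot (μ n : ℕ) (v : Fin n → Bool) : Prop :=
  ∀ r, 1 ≤ r → r ≤ n → μ * countB n v r ≤ countA n v r

-- Decided classically, like the numerator of `ballot_weak_integer_slope`, which is then this set
-- up to unfolding.
open Classical in
noncomputable def ballotSequences (μ n a : ℕ) : Finset (Fin n → Bool) :=
  univ.filter fun v => countA n v n = a ∧ IsBallot μ n v

section Ballot

variable {μ n a : ℕ}

theorem mem_ballotSequences {v : Fin n → Bool} :
    v ∈ ballotSequences μ n a ↔ countA n v n = a ∧ IsBallot μ n v := by
  simp [ballotSequences]

theorem isBallot_snoc_iff {u : Fin n → Bool} {x : Bool} :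
    IsBallot μ (n + 1) (Fin.snoc u x) ↔ IsBallot μ n u ∧
      μ * countB (n + 1) (Fin.snoc u x) (n + 1) ≤ countA (n + 1) (Fin.snoc u x) (n + 1) := by
  constructor
  · intro h
    refine ⟨fun r hr hrn => ?_, h _ n.succ_pos le_rfl⟩
    simpa [countA_snoc, countB_snoc, hrn.not_gt] using h r hr (hrn.trans n.le_succ)
  · rintro ⟨hu, hlast⟩ r hr hrn
    rcases hrn.lt_or_eq with hrn | rfl
    · have hrn : ¬ n < r := by omega
      simpa [countA_snoc, countB_snoc, hrn] using hu r hr (by omega)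
    · exact hlast

theorem snoc_mem_ballotSequences_iff {u : Fin n → Bool} {x : Bool} :
    Fin.snoc u x ∈ ballotSequences μ (n + 1) a ↔
      countA n u n + x.toNat = a ∧ IsBallot μ n u ∧ μ * (n + 1 - a) ≤ a := by
  have htotal := countA_add_countB_self (Fin.snoc u x)
  rw [mem_ballotSequences, isBallot_snoc_iff, countA_snoc_self] at *
  constructor
  · rintro ⟨rfl, hu, hlast⟩
    exact ⟨rfl, hu, by rwa [← htotal, Nat.add_sub_cancel_left]⟩
  · rintro ⟨rfl, hu, hlast⟩
    exact ⟨rfl, hu, by rwa [← htotal, Nat.add_sub_cancel_left] at hlast⟩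

theorem ballotSequences_eq_empty (h : a < μ * (n - a)) : ballotSequences μ n a = ∅ := by
  refine eq_empty_of_forall_notMem fun v hv => ?_
  obtain ⟨rfl, hballot⟩ := mem_ballotSequences.1 hv
  have hB : countB n v n = n - countA n v n := by
    have := countA_add_countB_self v
    omega
  have hn : 1 ≤ n := by
    by_contra! hn
    simp_all
  have hlast := hballot n hn le_rfl
  rw [hB] at hlast
  omega

theorem card_ballotSequences_succ (h : μ * (n + 1 - a) ≤ a) :
    #(ballotSequences μ (n + 1) a) =
      #(ballotSequences μ n a) + if a = 0 then 0 else #(ballotSequences μ n (a - 1)) := by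
  classical
  calc #(ballotSequences μ (n + 1) a)
      = ∑ v, if v ∈ ballotSequences μ (n + 1) a then 1 else 0 := by simp
    _ = ∑ p : Bool × (Fin n → Bool),
          if Fin.snoc p.2 p.1 ∈ ballotSequences μ (n + 1) a then 1 else 0 :=
        ((Fin.snocEquiv fun _ => Bool).sum_comp _).symm
    _ = _ := by
        rw [Fintype.sum_prod_type, Fintype.sum_bool]
        simp only [snoc_mem_ballotSequences_iff, h, and_true]
        rcases a with _ | a
        · simp [ballotSequences]
        · simp [ballotSequences, add_comm]

theorem card_ballotSequences_zero_votes : #(ballotSequences μ 0 a) = (0 : ℕ).choose a := by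
  have hcountA (v : Fin 0 → Bool) : countA 0 v 0 = 0 := by simp [countA]
  rcases a with _ | a
  · have hall : ballotSequences μ 0 0 = univ := eq_univ_of_forall fun v =>
      mem_ballotSequences.2 ⟨hcountA v, fun r hr hr0 => by omega⟩
    simp [hall]
  · have hnone : ballotSequences μ 0 (a + 1) = ∅ := eq_empty_of_forall_notMem fun v hv => by
      simp [mem_ballotSequences, hcountA] at hv
    simp [hnone]

theorem card_ballotSequences_add_mul_choose (h : μ * (n - a) ≤ a + 1) :
    #(ballotSequences μ n a) + μ * n.choose (a + 1) = n.choose a := by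
  induction n generalizing a with
  | zero => simp [card_ballotSequences_zero_votes]
  | succ n ih =>
    by_cases hc : μ * (n + 1 - a) ≤ a
    · rw [card_ballotSequences_succ hc]
      rcases a with _ | a
      · obtain rfl : μ = 0 := by simpa using hc
        simpa using ih (a := 0) (by simp)
      · rw [Nat.add_sub_add_right] at hc
        have h₁ := ih (a := a + 1)
          ((Nat.mul_le_mul_left μ (Nat.sub_le_sub_left a.le_succ n)).trans (by omega))
        have h₂ := ih (a := a) (by omega)
        simp only [Nat.choose_succ_succ, add_tsub_cancel_right, add_eq_zero, one_ne_zero,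
          and_false, if_false]
        linarith
    · rw [ballotSequences_eq_empty (by omega), card_empty, zero_add]
      exact (Nat.choose_eq_mul_choose_succ (by omega)).symm

end Ballot

theorem card_filter_countA_eq (n a : ℕ) :
    #{v : Fin n → Bool | countA n v n = a} = n.choose a := by
  have hvacuous :
      ballotSequences 0 n a = ({v | countA n v n = a} : Finset (Fin n → Bool)) := by
    ext v
    simp [mem_ballotSequences, IsBallot]
  rw [← hvacuous]
  simpa using card_ballotSequences_add_mul_choose (μ := 0) (n := n) (a := a) (by simp)

open Classical in
theorem ballot_weak_integer_slope_general (μ a b : ℕ) (hab : μ * b ≤ a) :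
    (((Finset.univ.filter (fun v : Fin (a + b) → Bool =>
        countA (a + b) v (a + b) = a ∧
        ∀ r, 1 ≤ r → r ≤ a + b → μ * countB (a + b) v r ≤ countA (a + b) v r)).card : ℝ) /
      ((Finset.univ.filter (fun v : Fin (a + b) → Bool =>
        countA (a + b) v (a + b) = a)).card : ℝ))
      = ((a : ℝ) - (μ : ℝ) * b + 1) / ((a : ℝ) + 1) := by
  change (#(ballotSequences μ (a + b) a) : ℝ) /
    #{v : Fin (a + b) → Bool | countA (a + b) v (a + b) = a} = _
  have hcount := card_ballotSequences_add_mul_choose (μ := μ) (n := a + b) (a := a)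
    (by rw [Nat.add_sub_cancel_left]; omega)
  have hchoose := Nat.choose_succ_right_eq (a + b) a
  rw [Nat.add_sub_cancel_left] at hchoose
  have hpos : 0 < (a + b).choose a := Nat.choose_pos (Nat.le_add_right a b)
  rw [card_filter_countA_eq, div_eq_div_iff (by positivity) (by positivity)]
  have hcountR : (#(ballotSequences μ (a + b) a) : ℝ) + μ * (a + b).choose (a + 1) =
      (a + b).choose a := by
    exact_mod_cast hcount
  have hchooseR : ((a + b).choose (a + 1) : ℝ) * (a + 1) = (a + b).choose a * b := by
    exact_mod_cast hchoose
  linear_combination ((a : ℝ) + 1) * hcountR - (μ : ℝ) * hchooseR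

open Classical in
theorem ballot_weak_integer_slope (μ a b : ℕ) (hμ : 0 < μ) (hab : μ * b ≤ a) :
    (((Finset.univ.filter (fun v : Fin (a + b) → Bool =>
        countA (a + b) v (a + b) = a ∧
        ∀ r, 1 ≤ r → r ≤ a + b → μ * countB (a + b) v r ≤ countA (a + b) v r)).card : ℝ) /
      ((Finset.univ.filter (fun v : Fin (a + b) → Bool =>
        countA (a + b) v (a + b) = a)).card : ℝ))
      = ((a : ℝ) - (μ : ℝ) * b + 1) / ((a : ℝ) + 1) :=
  ballot_weak_integer_slope_general μ a b hab
end

section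
/- Let μ be a positive real number and a, b positive integers with a ≥ μb. The probability P* that a random ordering of a votes for A and b votes for B satisfies a_r ≥ μ·b_r for all r is at least ⌊a - μb + 1⌋/(a + b). -/
/-!
Read the votes cyclically as a walk with steps `+1` (A) and `-μ` (B); over one period of
length `n = a + b` it drifts by `d = a - μb ∈ [0, n)`. The rotation starting at position `k`
satisfies the ballot condition exactly when `k` is a ladder point: the walk never returns
below its value at `k`. The future minimum of the walk grows by `d` over a period, only at
ladder points, and by at most `1` at each of them. Hence every period holds more than `d`
ladder points (exactly `d` would make every point a ladder point, forcing `n ≤ d`), so every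
sequence has at least `⌊d⌋ + 1` good rotations. Each rotation being injective, double
counting gives `(⌊d⌋ + 1) · #{sequences} ≤ n · #{good sequences}`.
-/

open Finset

namespace Ballot

def IsLadder (s : ℕ → ℝ) (k : ℕ) : Prop := ∀ r, k ≤ r → s k ≤ s r

/-- The minimum of `s` over `[k, ∞)`, provided `s (k + n) = s k + d` with `0 ≤ d`: it is then
attained in `[k, k + n]` (see `futureMin_le`). -/
def futureMin (s : ℕ → ℝ) (n k : ℕ) : ℝ := (Ico k (k + n + 1)).inf' ⟨k, by simp⟩ s

lemma exists_eq_futureMin (s : ℕ → ℝ) (n k : ℕ) :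
    ∃ j, k ≤ j ∧ j ≤ k + n ∧ s j = futureMin s n k := by
  obtain ⟨j, hj, h⟩ := exists_mem_eq_inf' (s := Ico k (k + n + 1)) ⟨k, by simp⟩ s
  rw [mem_Ico] at hj
  exact ⟨j, hj.1, by omega, h.symm⟩

section CycleLemma

variable {s : ℕ → ℝ} {n : ℕ} {d : ℝ}

lemma futureMin_le (hn : 0 < n) (hper : ∀ k, s (k + n) = s k + d) (hd : 0 ≤ d) {k r : ℕ}
    (hr : k ≤ r) : futureMin s n k ≤ s r := by
  induction r using Nat.strong_induction_on with
  | _ r ih =>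
    by_cases hrn : r ≤ k + n
    · exact inf'_le _ (mem_Ico.2 ⟨hr, by omega⟩)
    · obtain ⟨q, rfl⟩ : ∃ q, r = q + n := ⟨r - n, by omega⟩
      rw [hper]
      linarith [ih q (by omega) (by omega)]

lemma isLadder_of_eq_futureMin (hn : 0 < n) (hper : ∀ k, s (k + n) = s k + d) (hd : 0 ≤ d)
    {j k : ℕ} (hkj : k ≤ j) (h : s j = futureMin s n k) : IsLadder s j :=
  fun _ hr => h ▸ futureMin_le hn hper hd (hkj.trans hr)

lemma IsLadder.futureMin_eq {k : ℕ} (h : IsLadder s k) : futureMin s n k = s k :=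
  le_antisymm (inf'_le _ (by simp)) (le_inf' _ _ fun _ hr => h _ (mem_Ico.1 hr).1)

lemma IsLadder.of_add_period (hper : ∀ k, s (k + n) = s k + d) {k : ℕ}
    (h : IsLadder s (k + n)) : IsLadder s k := by
  intro r hr
  have := h (r + n) (by omega)
  rw [hper, hper] at this
  linarith

lemma futureMin_add_period (hn : 0 < n) (hper : ∀ k, s (k + n) = s k + d) (hd : 0 ≤ d)
    (k : ℕ) : futureMin s n (k + n) = futureMin s n k + d := by
  obtain ⟨j, hkj, -, hj⟩ := exists_eq_futureMin s n k
  obtain ⟨j', hkj', -, hj'⟩ := exists_eq_futureMin s n (k + n)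
  have h1 : futureMin s n (k + n) ≤ s (j + n) := futureMin_le hn hper hd (by omega)
  have h2 : futureMin s n k ≤ s (j' - n) := futureMin_le hn hper hd (by omega)
  have h3 : s j' = s (j' - n) + d := by rw [← hper, Nat.sub_add_cancel (by omega)]
  rw [hper] at h1
  linarith

open Classical in
lemma futureMin_succ_le (hn : 0 < n) (hper : ∀ k, s (k + n) = s k + d) (hd : 0 ≤ d)
    (hstep : ∀ k, s (k + 1) ≤ s k + 1) (k : ℕ) :
    futureMin s n (k + 1) ≤ futureMin s n k + if IsLadder s k then 1 else 0 := by
  obtain ⟨j, hkj, -, hj⟩ := exists_eq_futureMin s n k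
  rcases hkj.eq_or_lt with rfl | hlt
  · rw [if_pos (isLadder_of_eq_futureMin hn hper hd le_rfl hj), ← hj]
    exact (futureMin_le hn hper hd le_rfl).trans (hstep _)
  · have := futureMin_le hn hper hd hlt
    split_ifs <;> linarith

lemma IsLadder.succ_of_futureMin_succ_eq (hn : 0 < n) (hper : ∀ k, s (k + n) = s k + d)
    (hd : 0 ≤ d) (hstep : ∀ k, s (k + 1) ≤ s k + 1) {k : ℕ} (h : IsLadder s k)
    (hjump : futureMin s n (k + 1) = futureMin s n k + 1) : IsLadder s (k + 1) := by
  intro r hr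
  have := futureMin_le hn hper hd hr
  rw [hjump, h.futureMin_eq] at this
  linarith [hstep k]

open Classical in
theorem lt_card_filter_isLadder (hn : 0 < n) (hper : ∀ k, s (k + n) = s k + d) (hd : 0 ≤ d)
    (hdn : d < n) (hstep : ∀ k, s (k + 1) ≤ s k + 1) :
    d < #{k ∈ range n | IsLadder s k} := by
  have htel : ∑ k ∈ range n, (futureMin s n (k + 1) - futureMin s n k) = d := by
    have := futureMin_add_period hn hper hd 0
    rw [zero_add] at this
    rw [sum_range_sub, this]
    ring
  have hjump : ∀ k ∈ range n, futureMin s n (k + 1) - futureMin s n k ≤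
      if IsLadder s k then 1 else 0 :=
    fun k _ => by linarith [futureMin_succ_le hn hper hd hstep k]
  rw [← sum_boole]
  by_contra! hle
  have heq := (sum_eq_sum_iff_of_le hjump).1 (by linarith [sum_le_sum hjump])
  have hclosed (k : ℕ) (hk : k < n) (h : IsLadder s k) : IsLadder s (k + 1) := by
    have := heq k (mem_range.2 hk)
    rw [if_pos h] at this
    exact h.succ_of_futureMin_succ_eq hn hper hd hstep (by linarith)
  have hpropagate {i : ℕ} (hi : IsLadder s i) (j : ℕ) (hij : i ≤ j) (hjn : j ≤ n) :
      IsLadder s j := by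
    induction j, hij using Nat.le_induction with
    | base => exact hi
    | succ j hij ih => exact hclosed j (by omega) (ih (by omega))
  obtain ⟨j, -, hjn, hj⟩ := exists_eq_futureMin s n 0
  have h0 : IsLadder s 0 := IsLadder.of_add_period hper (by
    rw [zero_add]
    exact hpropagate (isLadder_of_eq_futureMin hn hper hd (Nat.zero_le j) hj) n (by omega) le_rfl)
  have hall : ∑ k ∈ range n, (if IsLadder s k then (1 : ℝ) else 0) = n := by
    rw [sum_congr rfl fun k hk => if_pos (hpropagate h0 k (Nat.zero_le k) (mem_range.1 hk).le)]
    simp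
  linarith

end CycleLemma

section Votes

open Fin.NatCast

variable {n : ℕ} [NeZero n]

/-- Votes are read cyclically (`(i : Fin n)` is `i mod n`), so the walk is defined for all `r`
and its increments have period `n`. -/
def voteWalk (μ : ℝ) (v : Fin n → Bool) (r : ℕ) : ℝ :=
  ∑ i ∈ range r, if v (i : Fin n) then 1 else -μ

def rotate (k : ℕ) (v : Fin n → Bool) : Fin n → Bool := fun i => v (i + (k : Fin n))

lemma rotate_injective (k : ℕ) : Function.Injective (rotate (n := n) k) := by
  intro v v' h
  funext i
  simpa [rotate] using congrFun h (i - (k : Fin n))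

lemma rotate_self (v : Fin n → Bool) : rotate n v = v := by
  funext i
  simp [rotate]

lemma voteWalk_add (μ : ℝ) (v : Fin n → Bool) (k r : ℕ) :
    voteWalk μ v (k + r) = voteWalk μ v k + voteWalk μ (rotate k v) r := by
  simp only [voteWalk, sum_range_add, rotate, Nat.cast_add, add_comm]

lemma voteWalk_add_period (μ : ℝ) (v : Fin n → Bool) (k : ℕ) :
    voteWalk μ v (k + n) = voteWalk μ v k + voteWalk μ v n := by
  rw [add_comm k, voteWalk_add, rotate_self, add_comm]

lemma voteWalk_rotate_period (μ : ℝ) (v : Fin n → Bool) (k : ℕ) :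
    voteWalk μ (rotate k v) n = voteWalk μ v n := by
  have := voteWalk_add μ v k n
  rw [voteWalk_add_period] at this
  linarith

lemma voteWalk_succ_le {μ : ℝ} (hμ : 0 ≤ μ) (v : Fin n → Bool) (k : ℕ) :
    voteWalk μ v (k + 1) ≤ voteWalk μ v k + 1 := by
  simp only [voteWalk, sum_range_succ]
  split_ifs <;> linarith

lemma countA_sub_countB (μ : ℝ) (v : Fin n → Bool) {r : ℕ} (hr : r ≤ n) :
    (countA n v r : ℝ) - μ * countB n v r = voteWalk μ v r := by
  have hterm (i : Fin n) : ((if i.val < r ∧ v i = true then 1 else 0) -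
      μ * if i.val < r ∧ v i = false then 1 else 0 : ℝ) =
      if i.val < r then (if v (i.val : Fin n) then 1 else -μ) else 0 := by
    by_cases hi : i.val < r <;> cases hv : v i <;> simp [hi, hv]
  have hrange : (range n).filter (· < r) = range r := by
    ext j
    simp only [mem_filter, mem_range]
    omega
  rw [countA, countB, natCast_card_filter, natCast_card_filter, mul_sum, ← sum_sub_distrib,
    sum_congr rfl fun i _ => hterm i,
    Fin.sum_univ_eq_sum_range (fun j => if j < r then (if v (j : Fin n) then 1 else -μ) else 0),
    ← sum_filter, hrange, voteWalk]

lemma countA_add_countB (v : Fin n → Bool) : countA n v n + countB n v n = n := by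
  -- with `μ = -1` every step is `+1`
  have h := countA_sub_countB (-1) v le_rfl
  simp only [voteWalk, neg_neg, ite_self, sum_const, card_range, nsmul_one] at h
  exact_mod_cast (by linarith : (countA n v n : ℝ) + countB n v n = n)

lemma countA_rotate (v : Fin n → Bool) (k : ℕ) : countA n (rotate k v) n = countA n v n := by
  -- with `μ = 0` the walk counts A-votes
  have h := countA_sub_countB 0 (rotate k v) le_rfl
  rw [voteWalk_rotate_period, ← countA_sub_countB 0 v le_rfl] at h
  exact_mod_cast (by linarith : (countA n (rotate k v) n : ℝ) = countA n v n)

lemma IsLadder.countB_rotate_le {μ : ℝ} {v : Fin n → Bool} {k : ℕ}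
    (h : IsLadder (voteWalk μ v) k) {r : ℕ} (hr : r ≤ n) :
    μ * countB n (rotate k v) r ≤ countA n (rotate k v) r := by
  have := h (k + r) (by omega)
  rw [voteWalk_add] at this
  linarith [countA_sub_countB μ (rotate k v) hr]

open Classical in
lemma floor_voteWalk_lt_card_filter_isLadder {μ : ℝ} (hμ : 0 ≤ μ) (v : Fin n → Bool)
    (hd : 0 ≤ voteWalk μ v n) (hdn : voteWalk μ v n < n) :
    ⌊voteWalk μ v n⌋₊ < #{k ∈ range n | IsLadder (voteWalk μ v) k} :=
  (Nat.floor_lt hd).2 <| lt_card_filter_isLadder (Nat.pos_of_neZero n)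
    (voteWalk_add_period μ v) hd hdn (voteWalk_succ_le hμ v)

lemma card_mul_le_card_mul_of_rotate (D G : Finset (Fin n → Bool)) (t : ℕ)
    (h : ∀ v ∈ D, t ≤ #{k ∈ range n | rotate k v ∈ G}) : #D * t ≤ n * #G := by
  have := card_mul_le_card_mul (fun v k => rotate k v ∈ G) h fun k _ =>
    card_le_card_of_injOn (rotate k) (fun v hv => (mem_filter.1 hv).2) (rotate_injective k).injOn
  simpa using this

end Votes

end Ballot

open Ballot Finset

open Classical in
theorem ballot_weak_lower_bound (μ : ℝ) (a b : ℕ) (hμ : 0 < μ) (ha : 0 < a) (hb : 0 < b)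
    (hab : μ * b ≤ a) :
    ((⌊(a : ℝ) - μ * b + 1⌋ : ℝ)) / ((a : ℝ) + b)
      ≤ (((Finset.univ.filter (fun v : Fin (a + b) → Bool =>
        countA (a + b) v (a + b) = a ∧
        ∀ r, 1 ≤ r → r ≤ a + b →
          μ * (countB (a + b) v r : ℝ) ≤ (countA (a + b) v r : ℝ))).card : ℝ) /
      ((Finset.univ.filter (fun v : Fin (a + b) → Bool =>
        countA (a + b) v (a + b) = a)).card : ℝ)) := by
  have : NeZero (a + b) := ⟨by omega⟩
  set G := Finset.univ.filter (fun v : Fin (a + b) → Bool => countA (a + b) v (a + b) = a ∧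
    ∀ r, 1 ≤ r → r ≤ a + b →
      μ * (countB (a + b) v r : ℝ) ≤ (countA (a + b) v r : ℝ))
  set D := Finset.univ.filter (fun v : Fin (a + b) → Bool => countA (a + b) v (a + b) = a)
  have hdrift (v : Fin (a + b) → Bool) (hv : countA (a + b) v (a + b) = a) :
      voteWalk μ v (a + b) = a - μ * b := by
    have hB : countB (a + b) v (a + b) = b := by have := countA_add_countB v; omega
    rw [← countA_sub_countB μ v le_rfl, hv, hB]
  have hrotations :
      ∀ v ∈ D,
        ⌊(a : ℝ) - μ * b⌋₊ + 1 ≤ #{k ∈ range (a + b) | rotate k v ∈ G} := by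
    intro v hvD
    have hv : countA (a + b) v (a + b) = a := (mem_filter.1 hvD).2
    have hcycle := floor_voteWalk_lt_card_filter_isLadder hμ.le v
      (by rw [hdrift v hv]; linarith)
      (by rw [hdrift v hv]; push_cast; linarith [mul_pos hμ (Nat.cast_pos.2 hb)])
    rw [hdrift v hv] at hcycle
    refine hcycle.trans_le (card_le_card fun k hk => ?_)
    obtain ⟨hkn, hk⟩ := mem_filter.1 hk
    simp only [G, mem_filter, mem_univ, true_and]
    exact ⟨hkn, by rw [countA_rotate, hv], fun r _ hr => hk.countB_rotate_le hr⟩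
  have hD : 0 < #D := card_pos.2 ⟨fun i => decide (i.val < a), mem_filter.2 ⟨mem_univ _, by
    simp [countA, Fin.card_filter_val_lt]⟩⟩
  have hcount := card_mul_le_card_mul_of_rotate D G _ hrotations
  rw [Int.floor_add_one, Int.cast_add, Int.cast_one,
    ← natCast_floor_eq_intCast_floor (by linarith),
    div_le_div_iff₀ (by positivity) (by exact_mod_cast hD)]
  have hcount' := (Nat.cast_le (α := ℝ)).2 hcount
  push_cast at hcount'
  linarith
end

section
/- Let μ be a positive real number and a, b positive integers with a > μb. For any fixed sequence of a votes for A and b votes for B, at least a - ⌊μb⌋ of its a+b cyclic permutations satisfy a_r > μ·b_r for all r. -/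
/-- Cyclic permutation moving the first `i` votes to the end. -/
def cyc {n : ℕ} (v : Fin n → Bool) (i : ℕ) : Fin n → Bool :=
  fun j => v ⟨(j.val + i) % n, Nat.mod_lt _ (Nat.lt_of_le_of_lt (Nat.zero_le j.val) j.isLt)⟩

/-!
Encode the ballot as the walk `g` that steps `+1` on a vote for `A` and `-μ` on a vote for `B`,
read periodically, so that `g (r + n) = g r + d` with `d = a - μ b`. The rotation starting at `i`
is good exactly when `g i < g j` for `i < j ≤ i + n`, i.e. when `g i` lies strictly below the
minimum `m (i + 1)` of `g` over the next window of length `n`. Since `d ≥ 0`, the window minima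
satisfy `m i = min (g i) (m (i + 1))`, so `m` can only increase at a good index `i`, and then by
at most `g (i + 1) - g i ≤ 1`. Over one period `m` increases by `d`, hence there are at least
`d` good rotations, and at least `⌈d⌉ = a - ⌊μ b⌋` since their number is an integer.
-/

open Finset

section WindowMin

def StaysAbove (n : ℕ) (g : ℕ → ℝ) (i : ℕ) : Prop :=
  ∀ r, 1 ≤ r → r ≤ n → g i < g (i + r)

noncomputable def windowMin (n : ℕ) [NeZero n] (g : ℕ → ℝ) (i : ℕ) : ℝ :=
  (range n).inf' (nonempty_range_iff.mpr (NeZero.ne n)) fun k => g (i + k)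

variable {n : ℕ} [NeZero n] {g : ℕ → ℝ} {d : ℝ}

theorem windowMin_le {k : ℕ} (i : ℕ) (hk : k < n) : windowMin n g i ≤ g (i + k) :=
  inf'_le _ (mem_range.mpr hk)

theorem windowMin_le_self (i : ℕ) : windowMin n g i ≤ g i := by
  simpa using windowMin_le (g := g) i (NeZero.pos n)

theorem staysAbove_iff_lt_windowMin (i : ℕ) :
    StaysAbove n g i ↔ g i < windowMin n g (i + 1) := by
  rw [windowMin, lt_inf'_iff]
  constructor
  · intro h k hk
    simpa [add_assoc, add_comm 1 k] using h (k + 1) le_add_self (mem_range.mp hk)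
  · intro h r hr1 hrn
    simpa [add_assoc, Nat.add_sub_cancel' hr1] using h (r - 1) (mem_range.mpr (by omega))

theorem windowMin_add_period (hper : ∀ r, g (r + n) = g r + d) (i : ℕ) :
    windowMin n g (i + n) = windowMin n g i + d := by
  simp only [windowMin, add_right_comm i n, hper]
  exact (map_finset_inf' (OrderIso.addRight d) _ _).symm

theorem windowMin_eq_min_succ (hd : 0 ≤ d) (hper : ∀ r, g (r + n) = g r + d) (i : ℕ) :
    windowMin n g i = min (g i) (windowMin n g (i + 1)) := by
  apply le_antisymm
  · refine le_min (windowMin_le_self i) (le_inf' _ _ fun k hk => ?_)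
    rcases Nat.lt_or_ge (k + 1) n with hk' | hk'
    · simpa [add_assoc, add_comm 1 k] using windowMin_le (g := g) i hk'
    · have hkn : i + 1 + k = i + n := by have := mem_range.mp hk; omega
      rw [hkn, hper]
      linarith [windowMin_le_self (n := n) (g := g) i]
  · refine le_inf' _ _ fun k hk => ?_
    rcases k with _ | k
    · exact min_le_left _ _
    · calc min (g i) (windowMin n g (i + 1)) ≤ windowMin n g (i + 1) := min_le_right _ _
        _ ≤ g (i + (k + 1)) := by
          simpa [add_assoc, add_comm 1 k] using
            windowMin_le (g := g) (i + 1) (k := k) (by have := mem_range.mp hk; omega)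

variable [DecidablePred (StaysAbove n g)]

theorem windowMin_succ_sub_le (hd : 0 ≤ d) (hper : ∀ r, g (r + n) = g r + d)
    (hstep : ∀ r, g (r + 1) ≤ g r + 1) (i : ℕ) :
    windowMin n g (i + 1) - windowMin n g i ≤ if StaysAbove n g i then 1 else 0 := by
  rw [windowMin_eq_min_succ hd hper i]
  by_cases h : StaysAbove n g i
  · rw [if_pos h, min_eq_left ((staysAbove_iff_lt_windowMin i).mp h).le]
    linarith [windowMin_le_self (n := n) (g := g) (i + 1), hstep i]
  · rw [staysAbove_iff_lt_windowMin, not_lt] at h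
    rw [if_neg ((staysAbove_iff_lt_windowMin i).not.mpr h.not_gt), min_eq_right h, sub_self]

theorem le_card_staysAbove (hd : 0 ≤ d) (hper : ∀ r, g (r + n) = g r + d)
    (hstep : ∀ r, g (r + 1) ≤ g r + 1) :
    d ≤ #{i ∈ range n | StaysAbove n g i} :=
  calc d = windowMin n g n - windowMin n g 0 := by
        linarith [zero_add n ▸ windowMin_add_period hper 0]
    _ = ∑ i ∈ range n, (windowMin n g (i + 1) - windowMin n g i) := (sum_range_sub _ _).symm
    _ ≤ ∑ i ∈ range n, if StaysAbove n g i then 1 else 0 :=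
        sum_le_sum fun i _ => windowMin_succ_sub_le hd hper hstep i
    _ = #{i ∈ range n | StaysAbove n g i} := sum_boole _ _

end WindowMin

section Votes

open Fin.NatCast

variable {n : ℕ} [NeZero n]

theorem card_fin_lt_and_eq_card_range (p : Fin n → Prop) [DecidablePred p] {r : ℕ}
    (hr : r ≤ n) : #{i : Fin n | i.val < r ∧ p i} = #{j ∈ range r | p ((j : ℕ) : Fin n)} := by
  refine card_nbij' Fin.val (fun j => (j : Fin n)) (fun i hi => ?_) (fun j hj => ?_)
    (fun i _ => Fin.cast_val_eq_self i) (fun j hj => ?_)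
  · simp_all
  all_goals
    simp only [coe_filter, mem_range, Set.mem_ofPred_eq] at hj
    simp [hj, Nat.mod_eq_of_lt (hj.1.trans_le hr)]

-- The cast `ℕ → Fin n` reduces indices modulo `n`, so the walk continues periodically past `n`.
noncomputable def voteWalk (μ : ℝ) (v : Fin n → Bool) (r : ℕ) : ℝ :=
  ∑ j ∈ range r, if v j then 1 else -μ

theorem countA_add_countB (u : Fin n → Bool) {r : ℕ} (hr : r ≤ n) :
    countA n u r + countB n u r = r := by
  rw [countA, countB, card_fin_lt_and_eq_card_range _ hr, card_fin_lt_and_eq_card_range _ hr]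
  simpa using card_filter_add_card_filter_not (s := range r) (fun j => u j = true)

theorem voteWalk_eq_count (μ : ℝ) (u : Fin n → Bool) {r : ℕ} (hr : r ≤ n) :
    voteWalk μ u r = countA n u r - μ * countB n u r := by
  rw [voteWalk, sum_ite, countA, countB, card_fin_lt_and_eq_card_range _ hr,
    card_fin_lt_and_eq_card_range _ hr]
  simp only [sum_const, nsmul_eq_mul, mul_one, Bool.not_eq_true, mul_neg]
  ring

theorem cyc_natCast (v : Fin n → Bool) (i j : ℕ) : cyc v i j = v ((i + j : ℕ) : Fin n) := by
  simp only [cyc]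
  congr 1
  ext
  change (j % n + i) % n = (i + j) % n
  rw [Nat.mod_add_mod, add_comm]

theorem voteWalk_cyc (μ : ℝ) (v : Fin n → Bool) (i r : ℕ) :
    voteWalk μ (cyc v i) r = voteWalk μ v (i + r) - voteWalk μ v i := by
  simp only [voteWalk, cyc_natCast, sum_range_add, add_sub_cancel_left]

theorem voteWalk_add_period (μ : ℝ) (v : Fin n → Bool) (r : ℕ) :
    voteWalk μ v (r + n) = voteWalk μ v r + voteWalk μ v n := by
  simp [voteWalk, add_comm r n, sum_range_add, add_comm]

theorem voteWalk_succ_le {μ : ℝ} (hμ : -1 ≤ μ) (v : Fin n → Bool) (r : ℕ) :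
    voteWalk μ v (r + 1) ≤ voteWalk μ v r + 1 := by
  rw [voteWalk, voteWalk, sum_range_succ]
  gcongr
  split_ifs <;> linarith

theorem staysAbove_voteWalk_iff (μ : ℝ) (v : Fin n → Bool) (i : ℕ) :
    StaysAbove n (voteWalk μ v) i ↔
      ∀ r, 1 ≤ r → r ≤ n → μ * (countB n (cyc v i) r : ℝ) < countA n (cyc v i) r :=
  forall₃_congr fun r _ hr => by
    rw [← sub_pos, ← voteWalk_cyc, voteWalk_eq_count μ _ hr, sub_pos]

end Votes

open Classical in
theorem cyclic_strict_count_general (μ : ℝ) (a b : ℕ) (hμ : 0 < μ)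
    (hab : μ * b < a) (v : Fin (a + b) → Bool) (hA : countA (a + b) v (a + b) = a) :
    (a : ℤ) - ⌊μ * (b : ℝ)⌋ ≤
      ((Finset.range (a + b)).filter (fun i =>
        ∀ r, 1 ≤ r → r ≤ a + b →
          μ * (countB (a + b) (cyc v i) r : ℝ) < (countA (a + b) (cyc v i) r : ℝ))).card := by
  have ha : 0 < a := by exact_mod_cast (mul_nonneg hμ.le b.cast_nonneg).trans_lt hab
  have : NeZero (a + b) := ⟨by omega⟩
  have hB : countB (a + b) v (a + b) = b := by
    have := countA_add_countB v le_rfl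
    omega
  have hperiod : voteWalk μ v (a + b) = a - μ * b := by
    rw [voteWalk_eq_count μ v le_rfl, hA, hB]
  have hcount := le_card_staysAbove (sub_nonneg.mpr hab.le)
    (fun r => by rw [voteWalk_add_period, hperiod]) (voteWalk_succ_le (by linarith) v)
  simp only [← staysAbove_voteWalk_iff]
  rw [sub_le_comm, Int.le_floor]
  push_cast
  linarith

open Classical in
theorem cyclic_strict_count (μ : ℝ) (a b : ℕ) (hμ : 0 < μ) (ha : 0 < a) (hb : 0 < b)
    (hab : μ * b < a) (v : Fin (a + b) → Bool) (hA : countA (a + b) v (a + b) = a) :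
    (a : ℤ) - ⌊μ * (b : ℝ)⌋ ≤
      ((Finset.range (a + b)).filter (fun i =>
        ∀ r, 1 ≤ r → r ≤ a + b →
          μ * (countB (a + b) (cyc v i) r : ℝ) < (countA (a + b) (cyc v i) r : ℝ))).card :=
  cyclic_strict_count_general μ a b hμ hab v hA
end

section
/- Let μ > 0 be real and consider a sequence of a+b votes with partial sums S_r = a_r - μ·b_r and S_{a+b} ≥ 0. If i is an index at which S_i is minimal, then the cyclic permutation moving the first i votes to the end satisfies S'_r ≥ 0 for all r, where S' is the weighted partial sum of the new sequence. -/
open Finset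

section PeriodicSums

variable {M : Type*} [AddCommGroup M] (f : ℕ → M) {n : ℕ}

theorem sum_range_comp_mod_of_le {m : ℕ} (hm : m ≤ n) :
    ∑ j ∈ range m, f (j % n) = ∑ j ∈ range m, f j :=
  sum_congr rfl fun j hj => by rw [Nat.mod_eq_of_lt (by grind)]

theorem sum_range_comp_mod_add_self (t : ℕ) :
    ∑ j ∈ range (n + t), f (j % n) = ∑ j ∈ range n, f j + ∑ j ∈ range t, f (j % n) := by
  simp only [sum_range_add, Nat.add_mod_left, sum_range_comp_mod_of_le f le_rfl]

theorem sum_range_comp_add_mod (i r : ℕ) :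
    ∑ j ∈ range r, f ((j + i) % n) =
      ∑ j ∈ range (i + r), f (j % n) - ∑ j ∈ range i, f (j % n) := by
  simp only [sum_range_add, add_comm _ i, add_sub_cancel_left]

theorem sum_range_comp_add_mod_nonneg [PartialOrder M] [IsOrderedAddMonoid M] {i r : ℕ}
    (hi : i ≤ n) (hr : r ≤ n) (hend : 0 ≤ ∑ j ∈ range n, f j)
    (hmin : ∀ s ≤ n, ∑ j ∈ range i, f j ≤ ∑ j ∈ range s, f j) :
    0 ≤ ∑ j ∈ range r, f ((j + i) % n) := by
  rw [sum_range_comp_add_mod, sub_nonneg, sum_range_comp_mod_of_le f hi]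
  rcases le_or_gt (i + r) n with hir | hir
  · rw [sum_range_comp_mod_of_le f hir]
    exact hmin _ hir
  · obtain ⟨t, hirt⟩ : ∃ t, i + r = n + t := ⟨i + r - n, by omega⟩
    have ht : t ≤ n := by omega
    rw [hirt, sum_range_comp_mod_add_self, sum_range_comp_mod_of_le f ht]
    exact (hmin t ht).trans (le_add_of_nonneg_left hend)

end PeriodicSums

section Votes

variable (μ : ℝ) {n : ℕ} (v : Fin n → Bool)

noncomputable def voteWeight (j : ℕ) : ℝ :=
  if h : j < n then (if v ⟨j, h⟩ then 1 else -μ) else 0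

theorem countA_sub_mul_countB_eq_sum {r : ℕ} (hr : r ≤ n) :
    (countA n v r : ℝ) - μ * countB n v r = ∑ j ∈ range r, voteWeight μ v j := by
  have hterm (j : Fin n) :
      (if j.val < r ∧ v j = true then (1 : ℝ) else 0) -
          μ * (if j.val < r ∧ v j = false then 1 else 0) =
        if j.val < r then voteWeight μ v j else 0 := by
    simp only [voteWeight, j.isLt, dif_pos, Fin.eta]
    by_cases h : j.val < r <;> cases v j <;> simp [h]
  simp only [countA, countB, card_filter, Nat.cast_sum, Nat.cast_ite, Nat.cast_one,
    Nat.cast_zero, mul_sum, ← sum_sub_distrib, hterm]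
  have hfilter : (range n).filter (· < r) = range r := by
    ext j
    simp only [mem_filter, mem_range]
    omega
  rw [Fin.sum_univ_eq_sum_range (fun j => if j < r then voteWeight μ v j else 0), ← sum_filter,
    hfilter]

theorem voteWeight_cyc (i : ℕ) {j : ℕ} (hj : j < n) :
    voteWeight μ (cyc v i) j = voteWeight μ v ((j + i) % n) := by
  simp only [voteWeight, dif_pos hj, dif_pos (Nat.mod_lt _ (Nat.zero_lt_of_lt hj))]
  rfl

end Votes

theorem shift_at_min_is_cute_general (μ : ℝ) (a b : ℕ)
    (v : Fin (a + b) → Bool)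
    (hend : 0 ≤ (countA (a + b) v (a + b) : ℝ) - μ * (countB (a + b) v (a + b) : ℝ))
    (i : ℕ) (hi : i ≤ a + b)
    (hmin : ∀ r, r ≤ a + b →
      (countA (a + b) v i : ℝ) - μ * (countB (a + b) v i : ℝ) ≤
        (countA (a + b) v r : ℝ) - μ * (countB (a + b) v r : ℝ)) :
    ∀ r, r ≤ a + b →
      0 ≤ (countA (a + b) (cyc v i) r : ℝ) - μ * (countB (a + b) (cyc v i) r : ℝ) := by
  intro r hr
  rw [countA_sub_mul_countB_eq_sum μ _ hr,
    sum_congr rfl fun j hj => voteWeight_cyc μ v i (by grind)]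
  refine sum_range_comp_add_mod_nonneg _ hi hr ?_ fun s hs => ?_
  · rwa [countA_sub_mul_countB_eq_sum μ v le_rfl] at hend
  · simpa only [countA_sub_mul_countB_eq_sum μ v hi, countA_sub_mul_countB_eq_sum μ v hs]
      using hmin s hs

theorem shift_at_min_is_cute (μ : ℝ) (a b : ℕ) (hμ : 0 < μ)
    (v : Fin (a + b) → Bool) (hA : countA (a + b) v (a + b) = a)
    (hB : countB (a + b) v (a + b) = b)
    (hend : 0 ≤ (countA (a + b) v (a + b) : ℝ) - μ * (countB (a + b) v (a + b) : ℝ))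
    (i : ℕ) (hi : i ≤ a + b)
    (hmin : ∀ r, r ≤ a + b →
      (countA (a + b) v i : ℝ) - μ * (countB (a + b) v i : ℝ) ≤
        (countA (a + b) v r : ℝ) - μ * (countB (a + b) v r : ℝ)) :
    ∀ r, r ≤ a + b →
      0 ≤ (countA (a + b) (cyc v i) r : ℝ) - μ * (countB (a + b) (cyc v i) r : ℝ) :=
  shift_at_min_is_cute_general μ a b v hend i hi hmin
end
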